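/- Suppose ‖x_i‖_1 ≤ R for all i ∈ {1,…,n}, where R > 0. Then for all W, W' ∈ ℝ^{k×d}, the gradient difference satisfies ‖D(W') − D(W)‖_1 ≤ (1/n)∑_{i=1}^n ‖g_i(W') − g_i(W)‖_1 ≤ 2R (exp(2R ‖W' − W‖_max) − 1) · G(W). -/

import Mathlib

open Finset Filter

/-- Softmax map on `ℝ^k`. -/
noncomputable def softmax {k : ℕ} (z : Fin k → ℝ) (c : Fin k) : ℝ :=
  Real.exp (z c) / ∑ j, Real.exp (z j)

/-- Logits `W x` of a linear classifier `W : ℝ^{k×d}` on input `x : ℝ^d`. -/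
noncomputable def logits {k d : ℕ} (W : Fin k → Fin d → ℝ) (x : Fin d → ℝ) : Fin k → ℝ :=
  fun c => ∑ j, W c j * x j

/-- Cross-entropy loss `L(W) = -(1/n) ∑ᵢ log S_{yᵢ}(W xᵢ)`. -/
noncomputable def lossCE {n k d : ℕ} (x : Fin n → Fin d → ℝ) (y : Fin n → Fin k)
    (W : Fin k → Fin d → ℝ) : ℝ :=
  -((1 : ℝ) / n) * ∑ i, Real.log (softmax (logits W (x i)) (y i))

/-- Proxy function `G(W) = (1/n) ∑ᵢ (1 - S_{yᵢ}(W xᵢ))`. -/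
noncomputable def proxyG {n k d : ℕ} (x : Fin n → Fin d → ℝ) (y : Fin n → Fin k)
    (W : Fin k → Fin d → ℝ) : ℝ :=
  ((1 : ℝ) / n) * ∑ i, (1 - softmax (logits W (x i)) (y i))

/-- Per-sample gradient matrix `gᵢ(W) = (S(W xᵢ) - e_{yᵢ}) xᵢᵀ`. -/
noncomputable def sampleGrad {k d : ℕ} (x : Fin d → ℝ) (y : Fin k)
    (W : Fin k → Fin d → ℝ) : Fin k → Fin d → ℝ :=
  fun c j => (softmax (logits W x) c - (if c = y then 1 else 0)) * x j

/-- Full gradient matrix `D(W) = (1/n) ∑ᵢ gᵢ(W)`. -/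
noncomputable def gradCE {n k d : ℕ} (x : Fin n → Fin d → ℝ) (y : Fin n → Fin k)
    (W : Fin k → Fin d → ℝ) : Fin k → Fin d → ℝ :=
  fun c j => ((1 : ℝ) / n) * ∑ i, sampleGrad (x i) (y i) W c j

/-- Entry-wise 1-norm of a matrix. -/
noncomputable def norm1M {k d : ℕ} (A : Fin k → Fin d → ℝ) : ℝ :=
  ∑ c, ∑ j, |A c j|

/-- 1-norm of a vector. -/
noncomputable def norm1V {d : ℕ} (v : Fin d → ℝ) : ℝ := ∑ j, |v j|

/-- `min_{c ≠ y} (e_y - e_c)ᵀ A x`. -/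
noncomputable def marginMin {k d : ℕ} (hk : 2 ≤ k) (A : Fin k → Fin d → ℝ)
    (x : Fin d → ℝ) (y : Fin k) : ℝ :=
  (Finset.univ.erase y).inf'
    (by
      obtain ⟨cne, hcne⟩ := Fintype.exists_ne_of_one_lt_card
        (by simpa using (by omega : 1 < k)) y
      exact ⟨cne, Finset.mem_erase.mpr ⟨hcne, Finset.mem_univ _⟩⟩)
    (fun c => logits A x y - logits A x c)

/-- `min_{i ∈ [n], c ≠ yᵢ} (e_{yᵢ} - e_c)ᵀ W xᵢ`. -/
noncomputable def dataMargin {n k d : ℕ} (hn : 1 ≤ n) (hk : 2 ≤ k)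
    (x : Fin n → Fin d → ℝ) (y : Fin n → Fin k) (W : Fin k → Fin d → ℝ) : ℝ :=
  Finset.univ.inf' ⟨⟨0, by omega⟩, Finset.mem_univ _⟩
    (fun i => marginMin hk W (x i) (y i))

/-- Max margin `γ` over the max-norm unit ball. -/
noncomputable def gammaMax {n k d : ℕ} (hn : 1 ≤ n) (hk : 2 ≤ k)
    (x : Fin n → Fin d → ℝ) (y : Fin n → Fin k) : ℝ :=
  sSup { g : ℝ | ∃ W' : Fin k → Fin d → ℝ, ‖W'‖ ≤ 1 ∧ g = dataMargin hn hk x y W' }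

/-- Mini-batch gradient `(1/b) ∑_{i ∈ B} gᵢ(W)`. -/
noncomputable def batchGrad {n k d : ℕ} (x : Fin n → Fin d → ℝ) (y : Fin n → Fin k)
    (B : Finset (Fin n)) (b : ℕ) (W : Fin k → Fin d → ℝ) : Fin k → Fin d → ℝ :=
  fun c j => ((1 : ℝ) / b) * ∑ i ∈ B, sampleGrad (x i) (y i) W c j

/-- Frobenius norm of a matrix. -/
noncomputable def frobNorm {k d : ℕ} (A : Fin k → Fin d → ℝ) : ℝ :=
  Real.sqrt (∑ c, ∑ j, (A c j) ^ 2)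

/-!
Moving `W` by `Δ` moves every logit `(W x)_c` by at most `ε = ‖Δ‖_max ‖x‖₁`, hence changes every
softmax probability by a factor in `[e^{-2ε}, e^{2ε}]`, i.e. by at most `(e^{2ε} - 1) S_c`.
Summed over the wrong classes `c ≠ y` this is `(e^{2ε} - 1)(1 - S_y)`; since both softmax vectors
sum to `1`, the change of `S_y` is no larger, which gives the factor `2`. Finally `g_i(W)` is
`S(W x_i) - e_{y_i}` times `x_iᵀ`, so its entrywise 1-norm picks up one more factor `‖x_i‖₁ ≤ R`.
-/

open Real

lemma sum_abs_sub_le_two_mul_sum_erase {ι : Type*} [Fintype ι] [DecidableEq ι] {p q : ι → ℝ}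
    (h : ∑ i, p i = ∑ i, q i) (y : ι) :
    ∑ i, |p i - q i| ≤ 2 * ∑ i ∈ univ.erase y, |p i - q i| := by
  have h_at_y : p y - q y = ∑ i ∈ univ.erase y, (q i - p i) := by
    rw [← Finset.add_sum_erase _ p (Finset.mem_univ y),
      ← Finset.add_sum_erase _ q (Finset.mem_univ y)] at h
    rw [Finset.sum_sub_distrib]
    linarith
  have h_abs_y : |p y - q y| ≤ ∑ i ∈ univ.erase y, |p i - q i| := by
    rw [h_at_y]
    simpa only [abs_sub_comm (q _)] using
      Finset.abs_sum_le_sum_abs (fun i => q i - p i) (univ.erase y)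
  rw [← Finset.add_sum_erase _ _ (Finset.mem_univ y)]
  linarith

section Softmax

variable {k : ℕ}

lemma sum_exp_pos (z : Fin k → ℝ) (c : Fin k) : 0 < ∑ j, exp (z j) :=
  Finset.sum_pos (fun _ _ => exp_pos _) ⟨c, Finset.mem_univ c⟩

lemma softmax_pos (z : Fin k → ℝ) (c : Fin k) : 0 < softmax z c :=
  div_pos (exp_pos _) (sum_exp_pos z c)

lemma sum_softmax (hk : 0 < k) (z : Fin k → ℝ) : ∑ c, softmax z c = 1 := by
  simp only [softmax]
  rw [← Finset.sum_div, div_self (sum_exp_pos z ⟨0, hk⟩).ne']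

lemma sum_erase_softmax (z : Fin k → ℝ) (y : Fin k) :
    ∑ c ∈ univ.erase y, softmax z c = 1 - softmax z y := by
  rw [eq_sub_iff_add_eq', Finset.add_sum_erase _ _ (Finset.mem_univ y), sum_softmax y.pos]

variable {z z' : Fin k → ℝ} {ε : ℝ}

lemma softmax_le_exp_mul_softmax (hε : ∀ c, |z' c - z c| ≤ ε) (c : Fin k) :
    softmax z' c ≤ exp (2 * ε) * softmax z c := by
  have h_num : exp (z' c) ≤ exp ε * exp (z c) := by
    rw [← exp_add, exp_le_exp]
    linarith [(abs_le.1 (hε c)).2]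
  have h_den : exp (-ε) * ∑ j, exp (z j) ≤ ∑ j, exp (z' j) := by
    rw [Finset.mul_sum]
    refine Finset.sum_le_sum fun j _ => ?_
    rw [← exp_add, exp_le_exp]
    linarith [(abs_le.1 (hε j)).1]
  calc softmax z' c ≤ exp ε * exp (z c) / (exp (-ε) * ∑ j, exp (z j)) :=
        div_le_div₀ (by positivity) h_num (mul_pos (exp_pos _) (sum_exp_pos z c)) h_den
    _ = exp (2 * ε) * softmax z c := by
        rw [mul_div_mul_comm, ← exp_sub, softmax]
        ring_nf

lemma abs_softmax_sub_le (hε : ∀ c, |z' c - z c| ≤ ε) (c : Fin k) :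
    |softmax z' c - softmax z c| ≤ (exp (2 * ε) - 1) * softmax z c := by
  have h_upper := softmax_le_exp_mul_softmax hε c
  have h_lower : exp (-(2 * ε)) * softmax z c ≤ softmax z' c := by
    have h := softmax_le_exp_mul_softmax (fun c => (abs_sub_comm _ _).trans_le (hε c)) c
    have h' := mul_le_mul_of_nonneg_left h (exp_pos (-(2 * ε))).le
    rwa [← mul_assoc, ← exp_add, neg_add_cancel, exp_zero, one_mul] at h'
  -- `1 - e^{-t} ≤ t ≤ e^t - 1`
  have h_exp : 1 - exp (-(2 * ε)) ≤ exp (2 * ε) - 1 := by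
    linarith [add_one_le_exp (2 * ε), add_one_le_exp (-(2 * ε))]
  have h_pos := (softmax_pos z c).le
  rw [abs_sub_le_iff]
  constructor
  · linarith
  · linarith [mul_le_mul_of_nonneg_right h_exp h_pos]

lemma sum_abs_softmax_sub_le (hε : ∀ c, |z' c - z c| ≤ ε) (y : Fin k) :
    ∑ c, |softmax z' c - softmax z c| ≤ 2 * (exp (2 * ε) - 1) * (1 - softmax z y) := by
  have h_sum : ∑ c, softmax z' c = ∑ c, softmax z c := by
    rw [sum_softmax y.pos, sum_softmax y.pos]
  calc ∑ c, |softmax z' c - softmax z c|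
      ≤ 2 * ∑ c ∈ univ.erase y, |softmax z' c - softmax z c| :=
        sum_abs_sub_le_two_mul_sum_erase h_sum y
    _ ≤ 2 * ∑ c ∈ univ.erase y, (exp (2 * ε) - 1) * softmax z c := by
        gcongr with c
        exact abs_softmax_sub_le hε c
    _ = 2 * (exp (2 * ε) - 1) * (1 - softmax z y) := by
        rw [← Finset.mul_sum, sum_erase_softmax, mul_assoc]

end Softmax

section Gradient

variable {k d : ℕ}

lemma abs_logits_le (A : Fin k → Fin d → ℝ) (x : Fin d → ℝ) (c : Fin k) :
    |logits A x c| ≤ ‖A‖ * norm1V x := by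
  have h_entry (j : Fin d) : |A c j| ≤ ‖A‖ := by
    simpa only [Real.norm_eq_abs] using (norm_le_pi_norm (A c) j).trans (norm_le_pi_norm A c)
  calc |logits A x c| ≤ ∑ j, |A c j| * |x j| := by
        simpa only [logits, abs_mul] using
          Finset.abs_sum_le_sum_abs (fun j => A c j * x j) univ
    _ ≤ ∑ j, ‖A‖ * |x j| := by gcongr with j; exact h_entry j
    _ = ‖A‖ * norm1V x := by rw [norm1V, Finset.mul_sum]

lemma logits_sub_logits (W W' : Fin k → Fin d → ℝ) (x : Fin d → ℝ) :
    logits W' x - logits W x = logits (W' - W) x := by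
  ext c
  simp only [logits, Pi.sub_apply, sub_mul, Finset.sum_sub_distrib]

lemma norm1M_smul (a : ℝ) (A : Fin k → Fin d → ℝ) : norm1M (a • A) = |a| * norm1M A := by
  simp only [norm1M, Pi.smul_apply, smul_eq_mul, abs_mul, Finset.mul_sum]

lemma norm1M_sum_le {ι : Type*} (s : Finset ι) (A : ι → Fin k → Fin d → ℝ) :
    norm1M (∑ i ∈ s, A i) ≤ ∑ i ∈ s, norm1M (A i) := by
  simp only [norm1M, Finset.sum_apply]
  rw [Finset.sum_comm (s := s)]
  gcongr with c
  rw [Finset.sum_comm (s := s)]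
  gcongr with j
  exact Finset.abs_sum_le_sum_abs _ _

lemma gradCE_eq_smul_sum {n : ℕ} (x : Fin n → Fin d → ℝ) (y : Fin n → Fin k)
    (W : Fin k → Fin d → ℝ) :
    gradCE x y W = ((1 : ℝ) / n) • ∑ i, sampleGrad (x i) (y i) W := by
  ext c j
  simp only [gradCE, Pi.smul_apply, Finset.sum_apply, smul_eq_mul]

lemma norm1M_sampleGrad_sub (x : Fin d → ℝ) (y : Fin k) (W W' : Fin k → Fin d → ℝ) :
    norm1M (sampleGrad x y W' - sampleGrad x y W)
      = (∑ c, |softmax (logits W' x) c - softmax (logits W x) c|) * norm1V x := by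
  rw [norm1M, Finset.sum_mul]
  refine Finset.sum_congr rfl fun c _ => ?_
  rw [norm1V, Finset.mul_sum]
  simp only [Pi.sub_apply, sampleGrad, ← abs_mul, ← sub_mul, sub_sub_sub_cancel_right]

lemma norm1M_sampleGrad_sub_le {x : Fin d → ℝ} {R : ℝ} (hx : norm1V x ≤ R) (y : Fin k)
    (W W' : Fin k → Fin d → ℝ) :
    norm1M (sampleGrad x y W' - sampleGrad x y W)
      ≤ 2 * R * (exp (2 * R * ‖W' - W‖) - 1) * (1 - softmax (logits W x) y) := by
  have h_logits (c : Fin k) : |logits W' x c - logits W x c| ≤ R * ‖W' - W‖ := by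
    rw [← Pi.sub_apply, logits_sub_logits, mul_comm]
    exact (abs_logits_le _ x c).trans (by gcongr)
  have h_softmax := sum_abs_softmax_sub_le h_logits y
  rw [← mul_assoc] at h_softmax
  rw [norm1M_sampleGrad_sub]
  calc (∑ c, |softmax (logits W' x) c - softmax (logits W x) c|) * norm1V x
      ≤ 2 * (exp (2 * R * ‖W' - W‖) - 1) * (1 - softmax (logits W x) y) * R :=
        mul_le_mul h_softmax hx (Finset.sum_nonneg fun _ _ => abs_nonneg _)
          ((Finset.sum_nonneg fun _ _ => abs_nonneg _).trans h_softmax)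
    _ = 2 * R * (exp (2 * R * ‖W' - W‖) - 1) * (1 - softmax (logits W x) y) := by ring

end Gradient

theorem grad_stability_general (n k d : ℕ)
    (x : Fin n → Fin d → ℝ) (y : Fin n → Fin k)
    (R : ℝ) (hx : ∀ i, norm1V (x i) ≤ R)
    (W W' : Fin k → Fin d → ℝ) :
    norm1M (gradCE x y W' - gradCE x y W)
      ≤ ((1 : ℝ) / n) * ∑ i, norm1M (sampleGrad (x i) (y i) W' - sampleGrad (x i) (y i) W)
    ∧ ((1 : ℝ) / n) * ∑ i, norm1M (sampleGrad (x i) (y i) W' - sampleGrad (x i) (y i) W)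
      ≤ 2 * R * (Real.exp (2 * R * ‖W' - W‖) - 1) * proxyG x y W := by
  constructor
  · rw [gradCE_eq_smul_sum, gradCE_eq_smul_sum, ← smul_sub, ← Finset.sum_sub_distrib,
      norm1M_smul, abs_of_nonneg (by positivity)]
    gcongr
    exact norm1M_sum_le _ _
  · rw [proxyG, mul_left_comm]
    gcongr
    rw [Finset.mul_sum]
    gcongr with i
    exact norm1M_sampleGrad_sub_le (hx i) (y i) W W'

/-- gradient stability via the proxy function:
`‖D(W') − D(W)‖₁ ≤ (1/n) ∑ᵢ ‖gᵢ(W') − gᵢ(W)‖₁ ≤ 2R (exp(2R‖W' − W‖_max) − 1) G(W)`. -/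
theorem grad_stability (n k d : ℕ) (hn : 1 ≤ n) (hk : 2 ≤ k) (hd : 1 ≤ d)
    (x : Fin n → Fin d → ℝ) (y : Fin n → Fin k)
    (R : ℝ) (hR : 0 < R) (hx : ∀ i, norm1V (x i) ≤ R)
    (W W' : Fin k → Fin d → ℝ) :
    norm1M (gradCE x y W' - gradCE x y W)
      ≤ ((1 : ℝ) / n) * ∑ i, norm1M (sampleGrad (x i) (y i) W' - sampleGrad (x i) (y i) W)
    ∧ ((1 : ℝ) / n) * ∑ i, norm1M (sampleGrad (x i) (y i) W' - sampleGrad (x i) (y i) W)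
      ≤ 2 * R * (Real.exp (2 * R * ‖W' - W‖) - 1) * proxyG x y W :=
  grad_stability_general n k d x y R hx W W'
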